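/- Let V be a finite-dimensional real normed vector space and A a linear endomorphism of V. Let V⁻ (respectively V⁺) be the sum of the real generalized eigenspaces of A corresponding to the complex eigenvalues of A with negative (respectively positive) real part. Then V⁻ = {v ∈ V : e^{tA} v → 0 as t → +∞} and V⁺ = {v ∈ V : e^{tA} v → 0 as t → −∞}. -/

import Mathlib

/-!
Over `ℂ` the space is the sum of the generalized eigenspaces of `B = A ⊗ ℂ`. On the one for `μ`,
`exp (t • B)` acts as `exp (t μ)` times a polynomial in `t`, so its vectors decay when `Re μ < 0`.
Conversely, the decaying vectors form a `B`-invariant subspace, hence the sum of its intersections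
with the generalized eigenspaces; for `Re μ ≥ 0` such an intersection would contain an eigenvector
`x` with `‖exp (t • B) x‖ = exp (t Re μ) ‖x‖ ≥ ‖x‖`, so it is zero. The map `v ↦ 1 ⊗ v` is a
closed embedding intertwining `exp (t • A)` with `exp (t • B)`, which brings this down to `V`;
replacing `A` by `-A` turns `V⁻` into `V⁺` and `t → +∞` into `t → -∞`.
-/

open Filter NormedSpace TensorProduct Topology

open scoped Nat

theorem tendsto_cexp_ofReal_mul_mul_pow_atTop {μ : ℂ} (hμ : μ.re < 0) (k : ℕ) :
    Tendsto (fun t : ℝ => Complex.exp (t * μ) * (t : ℂ) ^ k) atTop (𝓝 0) := by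
  rw [tendsto_zero_iff_norm_tendsto_zero]
  refine (tendsto_rpow_mul_exp_neg_mul_atTop_nhds_zero k (-μ.re) (neg_pos.mpr hμ)).congr' ?_
  filter_upwards [eventually_ge_atTop 0] with t ht
  simp [Complex.norm_exp, Complex.norm_real, Real.norm_of_nonneg ht, mul_comm]

theorem exp_apply_of_pow_apply_eq_zero {𝕂 E : Type*} [RCLike 𝕂] [NormedAddCommGroup E]
    [NormedSpace 𝕂 E] [CompleteSpace E] {N : E →L[𝕂] E} {x : E} {m : ℕ} (hx : (N ^ m) x = 0) :
    exp N x = ∑ k ∈ Finset.range m, (k ! : 𝕂)⁻¹ • (N ^ k) x := by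
  refine ((exp_series_hasSum_exp' (𝕂 := 𝕂) N).mapL (ContinuousLinearMap.apply 𝕂 E x)).unique
    (hasSum_sum_of_ne_finset_zero fun k hk => ?_)
  rw [Finset.mem_range, not_lt] at hk
  have hNk : (N ^ k) x = 0 := by
    rw [← Nat.sub_add_cancel hk, pow_add, mul_apply_eq_comp, hx, map_zero]
  simp [hNk]

namespace Module.End

theorem maxGenEigenspace_neg {R M : Type*} [CommRing R] [AddCommGroup M] [Module R M]
    (f : Module.End R M) (μ : R) :
    maxGenEigenspace (-f) μ = maxGenEigenspace f (-μ) := by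
  ext x
  have h : -f - μ • 1 = (-1 : R) • (f - (-μ) • 1) := by
    rw [neg_one_smul, neg_smul, sub_neg_eq_add, neg_add']
  simp only [mem_maxGenEigenspace, h, smul_pow, LinearMap.smul_apply,
    (isUnit_neg_one.pow _).smul_eq_zero]

theorem iSup_maxGenEigenspace_neg_re_neg {M : Type*} [AddCommGroup M] [Module ℂ M]
    (f : Module.End ℂ M) :
    ⨆ μ : ℂ, ⨆ _ : μ.re < 0, maxGenEigenspace (-f) μ =
      ⨆ μ : ℂ, ⨆ _ : 0 < μ.re, maxGenEigenspace f μ := by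
  rw [← (Equiv.neg ℂ).iSup_comp]
  simp [maxGenEigenspace_neg]

end Module.End

section ComplexOperator

variable {W : Type*} [NormedAddCommGroup W] [NormedSpace ℂ W]

def stableSubmodule (B : W →L[ℂ] W) : Submodule ℂ W where
  carrier := {x | Tendsto (fun t : ℝ => exp ((t : ℂ) • B) x) atTop (𝓝 0)}
  add_mem' hx hy := by simpa using hx.add hy
  zero_mem' := by simp
  smul_mem' c _ hx := by simpa using hx.const_smul c

theorem mem_stableSubmodule {B : W →L[ℂ] W} {x : W} :
    x ∈ stableSubmodule B ↔ Tendsto (fun t : ℝ => exp ((t : ℂ) • B) x) atTop (𝓝 0) :=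
  Iff.rfl

theorem apply_mem_stableSubmodule {B : W →L[ℂ] W} {x : W} (hx : x ∈ stableSubmodule B) :
    B x ∈ stableSubmodule B := by
  have hcomm (t : ℝ) : exp ((t : ℂ) • B) (B x) = B (exp ((t : ℂ) • B) x) := by
    rw [← mul_apply_eq_comp, ← mul_apply_eq_comp, ((Commute.refl B).smul_left _).exp_left.eq]
  have hBx := (B.continuous.tendsto 0).comp hx
  rw [map_zero] at hBx
  exact hBx.congr fun t => (hcomm t).symm

section Complete

variable [CompleteSpace W]

theorem exp_smul_apply_of_pow_sub_smul_apply_eq_zero {B : W →L[ℂ] W} {μ : ℂ} {x : W} {m : ℕ}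
    (hx : ((B - μ • 1) ^ m) x = 0) (z : ℂ) :
    exp (z • B) x =
      Complex.exp (z * μ) • ∑ k ∈ Finset.range m, (z ^ k / k !) • ((B - μ • 1) ^ k) x := by
  -- `exp_add_of_commute` asks for a `ℚ`-normed-algebra structure, which is not inferred here.
  let : NormedAlgebra ℚ (W →L[ℂ] W) := NormedAlgebra.restrictScalars ℚ ℂ _
  have hsplit : z • B = algebraMap ℂ _ (z * μ) + z • (B - μ • 1) := by
    rw [Algebra.algebraMap_eq_smul_one, smul_sub, mul_smul]; abel
  have hzx : ((z • (B - μ • 1)) ^ m) x = 0 := by simp [smul_pow, hx]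
  rw [hsplit, exp_add_of_commute (Algebra.commute_algebraMap_left _ _), ← algebraMap_exp_comm,
    ← Complex.exp_eq_exp_ℂ, Algebra.algebraMap_eq_smul_one, smul_mul_assoc, one_mul,
    smul_apply, exp_apply_of_pow_apply_eq_zero hzx]
  simp [smul_pow, smul_smul, div_eq_inv_mul]

theorem tendsto_exp_smul_apply_of_mem_maxGenEigenspace {B : W →L[ℂ] W} {μ : ℂ} (hμ : μ.re < 0)
    {x : W} (hx : x ∈ Module.End.maxGenEigenspace (B : W →ₗ[ℂ] W) μ) :
    Tendsto (fun t : ℝ => exp ((t : ℂ) • B) x) atTop (𝓝 0) := by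
  obtain ⟨m, hm⟩ := (Module.End.mem_maxGenEigenspace _ _ _).mp hx
  have hNm : ((B - μ • 1) ^ m) x = 0 := by
    rw [← hm, ← ContinuousLinearMap.coe_coe, ContinuousLinearMap.toLinearMap_pow]; simp
  simp_rw [exp_smul_apply_of_pow_sub_smul_apply_eq_zero hNm, Finset.smul_sum, smul_smul]
  rw [← Finset.sum_const_zero (s := Finset.range m)]
  refine tendsto_finsetSum _ fun k _ => ?_
  rw [← zero_smul ℂ (((B - μ • 1) ^ k) x)]
  refine Tendsto.smul_const ?_ _
  simpa [mul_div_assoc] using (tendsto_cexp_ofReal_mul_mul_pow_atTop hμ k).div_const (k ! : ℂ)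

theorem re_neg_of_tendsto_exp_smul_apply {B : W →L[ℂ] W} {μ : ℂ} {x : W} (hBx : B x = μ • x)
    (hx : x ≠ 0) (h : Tendsto (fun t : ℝ => exp ((t : ℂ) • B) x) atTop (𝓝 0)) : μ.re < 0 := by
  by_contra! hμ
  have hBx' : ((B - μ • (1 : W →L[ℂ] W)) ^ 1) x = 0 := by simp [hBx]
  have hgrow : ∀ t : ℝ, 0 ≤ t → ‖x‖ ≤ ‖exp ((t : ℂ) • B) x‖ := fun t ht => by
    rw [exp_smul_apply_of_pow_sub_smul_apply_eq_zero hBx']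
    simp only [Finset.sum_range_one, pow_zero, Nat.factorial_zero, Nat.cast_one, div_one,
      one_smul, norm_smul, Complex.norm_exp]
    exact le_mul_of_one_le_left (norm_nonneg x)
      (Real.one_le_exp (by rw [Complex.re_ofReal_mul]; positivity))
  have hle := ge_of_tendsto h.norm (eventually_atTop.mpr ⟨0, hgrow⟩)
  exact hx (norm_le_zero_iff.mp (by simpa using hle))

theorem iSup_maxGenEigenspace_le_stableSubmodule (B : W →L[ℂ] W) :
    ⨆ μ : ℂ, ⨆ _ : μ.re < 0, Module.End.maxGenEigenspace (B : W →ₗ[ℂ] W) μ ≤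
      stableSubmodule B :=
  iSup₂_le fun _ hμ _ hx => tendsto_exp_smul_apply_of_mem_maxGenEigenspace hμ hx

theorem stableSubmodule_inf_maxGenEigenspace_eq_bot (B : W →L[ℂ] W) {μ : ℂ} (hμ : 0 ≤ μ.re) :
    stableSubmodule B ⊓ Module.End.maxGenEigenspace (B : W →ₗ[ℂ] W) μ = ⊥ := by
  have hS : ∀ x ∈ stableSubmodule B, (B : W →ₗ[ℂ] W) x ∈ stableSubmodule B :=
    fun _ => apply_mem_stableSubmodule
  suffices Module.End.genEigenspace ((B : W →ₗ[ℂ] W).restrict hS) μ ⊤ = ⊥ by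
    rw [Submodule.inf_genEigenspace _ _ hS, this, Submodule.map_bot]
  by_contra hne
  obtain ⟨x, hx, hx0⟩ :=
    (Module.End.HasUnifEigenvalue.lt zero_lt_one hne).exists_hasUnifEigenvector
  rw [Module.End.mem_genEigenspace_one] at hx
  have hBx : B x = μ • (x : W) := congrArg Subtype.val hx
  exact hμ.not_gt (re_neg_of_tendsto_exp_smul_apply hBx (by simpa using hx0) x.2)

end Complete

theorem stableSubmodule_le_iSup_maxGenEigenspace [FiniteDimensional ℂ W] (B : W →L[ℂ] W) :
    stableSubmodule B ≤
      ⨆ μ : ℂ, ⨆ _ : μ.re < 0, Module.End.maxGenEigenspace (B : W →ₗ[ℂ] W) μ := by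
  have hS : ∀ x ∈ stableSubmodule B, (B : W →ₗ[ℂ] W) x ∈ stableSubmodule B :=
    fun _ => apply_mem_stableSubmodule
  conv_lhs => rw [Submodule.eq_iSup_inf_genEigenspace ⊤ hS
    (Module.End.iSup_maxGenEigenspace_eq_top _)]
  refine iSup_le fun μ => ?_
  rcases lt_or_ge μ.re 0 with hμ | hμ
  · exact inf_le_right.trans (le_iSup₂_of_le μ hμ le_rfl)
  · exact (stableSubmodule_inf_maxGenEigenspace_eq_bot B hμ).trans_le bot_le

theorem iSup_maxGenEigenspace_re_neg_eq_stableSubmodule [FiniteDimensional ℂ W]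
    (B : W →L[ℂ] W) :
    ⨆ μ : ℂ, ⨆ _ : μ.re < 0, Module.End.maxGenEigenspace (B : W →ₗ[ℂ] W) μ =
      stableSubmodule B :=
  (iSup_maxGenEigenspace_le_stableSubmodule B).antisymm
    (stableSubmodule_le_iSup_maxGenEigenspace B)

end ComplexOperator

section ComplexificationNorm

/- `ℂ ⊗[ℝ] V` carries no norm in Mathlib; the one transported from a `ℂ`-basis is compatible with
both scalar actions. It is only auxiliary: `tendsto_exp_smul_apply_atTop_iff` does not mention it. -/

variable (V : Type*) [AddCommGroup V] [Module ℝ V] [FiniteDimensional ℝ V]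

noncomputable def complexificationEquivFun :
    ℂ ⊗[ℝ] V ≃ₗ[ℂ] (Fin (Module.finrank ℂ (ℂ ⊗[ℝ] V)) → ℂ) :=
  (Module.finBasis ℂ (ℂ ⊗[ℝ] V)).equivFun

noncomputable abbrev complexificationNormedAddCommGroup : NormedAddCommGroup (ℂ ⊗[ℝ] V) :=
  NormedAddCommGroup.induced _ _ (complexificationEquivFun V)
    (complexificationEquivFun V).injective

attribute [local instance] complexificationNormedAddCommGroup

noncomputable abbrev complexificationNormedSpace : NormedSpace ℂ (ℂ ⊗[ℝ] V) :=
  NormedSpace.induced ℂ _ _ (complexificationEquivFun V)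

noncomputable abbrev complexificationRealNormedSpace : NormedSpace ℝ (ℂ ⊗[ℝ] V) :=
  NormedSpace.induced ℝ _ _ ((complexificationEquivFun V).restrictScalars ℝ)

end ComplexificationNorm

section Complexification

attribute [local instance] complexificationNormedAddCommGroup complexificationNormedSpace
  complexificationRealNormedSpace

variable {V : Type*} [NormedAddCommGroup V] [NormedSpace ℝ V] [FiniteDimensional ℝ V]

theorem tmul_exp_smul_apply (A : V →L[ℝ] V) (t : ℝ) (v : V) :
    (1 : ℂ) ⊗ₜ[ℝ] exp (t • A) v =
      exp ((t : ℂ) • LinearMap.toContinuousLinearMap ((A : V →ₗ[ℝ] V).baseChange ℂ))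
        ((1 : ℂ) ⊗ₜ[ℝ] v) := by
  let Φ : (V →L[ℝ] V) →ₐ[ℝ] ((ℂ ⊗[ℝ] V) →L[ℂ] (ℂ ⊗[ℝ] V)) :=
    ((Module.End.toContinuousLinearMap (ℂ ⊗[ℝ] V)).toAlgHom.restrictScalars ℝ).comp
      ((Module.End.baseChangeHom ℝ ℂ V).comp (Module.End.toContinuousLinearMap V).symm.toAlgHom)
  have hΦ : Continuous Φ := Φ.toLinearMap.continuous_of_finiteDimensional
  have hΦA : Φ (t • A) =
      (t : ℂ) • LinearMap.toContinuousLinearMap ((A : V →ₗ[ℝ] V).baseChange ℂ) := by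
    rw [map_smul, ← algebraMap_smul ℂ t]; rfl
  have hexp := map_exp_of_mem_ball (𝕂 := ℝ) Φ hΦ (t • A)
    ((expSeries_radius_eq_top ℝ (V →L[ℝ] V)).symm ▸ edist_lt_top _ _)
  rw [← hΦA, ← hexp]
  rfl

theorem tendsto_exp_smul_apply_atTop_iff (A : V →L[ℝ] V) (v : V) :
    Tendsto (fun t : ℝ => exp (t • A) v) atTop (𝓝 0) ↔
      ((1 : ℂ) ⊗ₜ[ℝ] v : ℂ ⊗[ℝ] V) ∈ ⨆ μ : ℂ, ⨆ _ : μ.re < 0,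
        Module.End.maxGenEigenspace ((A : V →ₗ[ℝ] V).baseChange ℂ) μ := by
  have hι : IsClosedEmbedding (TensorProduct.mk ℝ ℂ V 1) :=
    LinearMap.isClosedEmbedding_of_injective
      (LinearMap.ker_eq_bot.mpr (Module.Flat.tensorProduct_mk_injective ℝ V ℂ))
  rw [← LinearMap.coe_toContinuousLinearMap ((A : V →ₗ[ℝ] V).baseChange ℂ),
    iSup_maxGenEigenspace_re_neg_eq_stableSubmodule, mem_stableSubmodule,
    hι.tendsto_nhds_iff]
  simp only [Function.comp_def, TensorProduct.mk_apply, tmul_zero, tmul_exp_smul_apply]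

end Complexification

/-- Let `V` be a finite-dimensional real normed vector space and `A` a linear
endomorphism of `V`.  A vector `v` lies in `V⁻` (the sum of the real generalized eigenspaces of
`A` for eigenvalues with negative real part, expressed via the complexification) if and only if
`e^{tA} v → 0` as `t → +∞`; and `v` lies in `V⁺` if and only if `e^{tA} v → 0` as `t → -∞`. -/
theorem stable_unstable_subspace_characterization
    {V : Type*} [NormedAddCommGroup V] [NormedSpace ℝ V] [FiniteDimensional ℝ V]
    (A : V →L[ℝ] V) :
    ∀ v : V,
      ((((1 : ℂ) ⊗ₜ[ℝ] v : ℂ ⊗[ℝ] V) ∈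
          (⨆ μ : ℂ, ⨆ _ : μ.re < 0,
            Module.End.maxGenEigenspace ((A : V →ₗ[ℝ] V).baseChange ℂ) μ)) ↔
        Tendsto (fun t : ℝ => exp (t • A) v) atTop (𝓝 0)) ∧
      ((((1 : ℂ) ⊗ₜ[ℝ] v : ℂ ⊗[ℝ] V) ∈
          (⨆ μ : ℂ, ⨆ _ : 0 < μ.re,
            Module.End.maxGenEigenspace ((A : V →ₗ[ℝ] V).baseChange ℂ) μ)) ↔
        Tendsto (fun t : ℝ => exp (t • A) v) atBot (𝓝 0)) := by
  intro v
  refine ⟨(tendsto_exp_smul_apply_atTop_iff A v).symm, ?_⟩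
  have hneg :
      ((-A : V →L[ℝ] V) : V →ₗ[ℝ] V).baseChange ℂ = -(A : V →ₗ[ℝ] V).baseChange ℂ := by
    simp [LinearMap.baseChange_neg]
  rw [← Module.End.iSup_maxGenEigenspace_neg_re_neg, ← hneg,
    ← tendsto_exp_smul_apply_atTop_iff, ← tendsto_comp_neg_atTop_iff]
  simp_rw [neg_smul, ← smul_neg]
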